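/- Let K be an odd positive integer and let γ₁, γ₂ : {0,…,K} → [0,1] both satisfy γ(l) = γ(K−l) for all l, with γ₁(l) ≥ γ₂(l) for every l ∈ {0,…,K}. Let p ∈ [0,1] and set α_l = C(K,l) p^l (1−p)^{K−l}. Then | (1/2) Σ_{l=(K+1)/2}^{K} (1 − γ₁(l)) (α_l − α_{K−l}) | ≤ | (1/2) Σ_{l=(K+1)/2}^{K} (1 − γ₂(l)) (α_l − α_{K−l}) |. In words: in the i.i.d. setting, the error E(DaRRM_γ) = |Pr[DaRRM_γ = 1] − Pr[majority = 1]| of DaRRM with the pointwise larger symmetric noise function γ₁ is at most that with γ₂. -/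
import Mathlib


open Finset

/-- in the i.i.d. setting, the DaRRM error with the pointwise
larger symmetric noise function `γ₁` is at most the error with `γ₂`. -/
theorem statement14 (K : ℕ) (hK : Odd K) (hKpos : 0 < K)
    (γ1 γ2 : ℕ → ℝ)
    (h1 : ∀ l ≤ K, 0 ≤ γ1 l ∧ γ1 l ≤ 1) (h2 : ∀ l ≤ K, 0 ≤ γ2 l ∧ γ2 l ≤ 1)
    (hs1 : ∀ l ≤ K, γ1 l = γ1 (K - l)) (hs2 : ∀ l ≤ K, γ2 l = γ2 (K - l))
    (hge : ∀ l ≤ K, γ2 l ≤ γ1 l)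
    (p : ℝ) (hp0 : 0 ≤ p) (hp1 : p ≤ 1)
    (α : ℕ → ℝ) (hα : ∀ l, α l = (K.choose l : ℝ) * p ^ l * (1 - p) ^ (K - l)) :
    |(1 / 2) * ∑ l ∈ Finset.Icc ((K + 1) / 2) K, (1 - γ1 l) * (α l - α (K - l))|
      ≤ |(1 / 2) * ∑ l ∈ Finset.Icc ((K + 1) / 2) K, (1 - γ2 l) * (α l - α (K - l))| := by
  have hfac : ∀ l ∈ Finset.Icc ((K + 1) / 2) K,
      α l - α (K - l) = (K.choose l : ℝ) * p ^ (K - l) * (1 - p) ^ (K - l)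
        * (p ^ (2 * l - K) - (1 - p) ^ (2 * l - K)) := by
    intro l hl
    simp only [Finset.mem_Icc] at hl
    have hK2 : K + 1 ≤ 2 * l := by
      obtain ⟨k, hk⟩ := hK; omega
    have e1 : p ^ l = p ^ (K - l) * p ^ (2 * l - K) := by
      rw [← pow_add]; congr 1; omega
    have e2 : (1 - p) ^ l = (1 - p) ^ (K - l) * (1 - p) ^ (2 * l - K) := by
      rw [← pow_add]; congr 1; omega
    have e3 : K - (K - l) = l := by omega
    rw [hα, hα, e3, show K.choose (K - l) = K.choose l from Nat.choose_symm hl.2, e1, e2]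
    ring
  have hnn : ∀ l ∈ Finset.Icc ((K + 1) / 2) K,
      (0 ≤ (K.choose l : ℝ) * p ^ (K - l) * (1 - p) ^ (K - l)) := by
    intro l hl
    have : (0:ℝ) ≤ 1 - p := by linarith
    positivity
  rcases le_total p (1/2) with hp | hp
  · -- diff ≤ 0
    have hdle : ∀ l ∈ Finset.Icc ((K + 1) / 2) K, α l - α (K - l) ≤ 0 := by
      intro l hl
      rw [hfac l hl]
      have : p ^ (2 * l - K) ≤ (1 - p) ^ (2 * l - K) :=
        pow_le_pow_left₀ hp0 (by linarith) _
      have h0 := hnn l hl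
      nlinarith
    have key : ∀ l ∈ Finset.Icc ((K + 1) / 2) K,
        (1 - γ2 l) * (α l - α (K - l)) ≤ (1 - γ1 l) * (α l - α (K - l)) ∧
        (1 - γ1 l) * (α l - α (K - l)) ≤ 0 := by
      intro l hl
      have hlK : l ≤ K := (Finset.mem_Icc.mp hl).2
      have hd := hdle l hl
      have hg1 := h1 l hlK
      have hg := hge l hlK
      constructor
      · apply mul_le_mul_of_nonpos_right (by linarith) hd
      · exact mul_nonpos_of_nonneg_of_nonpos (by linarith [hg1.2]) hd
    have hS1 : ∑ l ∈ Finset.Icc ((K + 1) / 2) K, (1 - γ1 l) * (α l - α (K - l)) ≤ 0 :=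
      Finset.sum_nonpos fun l hl => (key l hl).2
    have hS2le : ∑ l ∈ Finset.Icc ((K + 1) / 2) K, (1 - γ2 l) * (α l - α (K - l))
        ≤ ∑ l ∈ Finset.Icc ((K + 1) / 2) K, (1 - γ1 l) * (α l - α (K - l)) :=
      Finset.sum_le_sum fun l hl => (key l hl).1
    rw [abs_of_nonpos (by linarith), abs_of_nonpos (by linarith)]
    linarith
  · have hdge : ∀ l ∈ Finset.Icc ((K + 1) / 2) K, 0 ≤ α l - α (K - l) := by
      intro l hl
      rw [hfac l hl]
      have : (1 - p) ^ (2 * l - K) ≤ p ^ (2 * l - K) :=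
        pow_le_pow_left₀ (by linarith) (by linarith) _
      have h0 := hnn l hl
      nlinarith
    have key : ∀ l ∈ Finset.Icc ((K + 1) / 2) K,
        (1 - γ1 l) * (α l - α (K - l)) ≤ (1 - γ2 l) * (α l - α (K - l)) ∧
        0 ≤ (1 - γ1 l) * (α l - α (K - l)) := by
      intro l hl
      have hlK : l ≤ K := (Finset.mem_Icc.mp hl).2
      have hd := hdge l hl
      have hg1 := h1 l hlK
      have hg := hge l hlK
      constructor
      · apply mul_le_mul_of_nonneg_right (by linarith) hd
      · exact mul_nonneg (by linarith [hg1.2]) hd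
    have hS1 : 0 ≤ ∑ l ∈ Finset.Icc ((K + 1) / 2) K, (1 - γ1 l) * (α l - α (K - l)) :=
      Finset.sum_nonneg fun l hl => (key l hl).2
    have hS2le : ∑ l ∈ Finset.Icc ((K + 1) / 2) K, (1 - γ1 l) * (α l - α (K - l))
        ≤ ∑ l ∈ Finset.Icc ((K + 1) / 2) K, (1 - γ2 l) * (α l - α (K - l)) :=
      Finset.sum_le_sum fun l hl => (key l hl).1
    rw [abs_of_nonneg (by linarith), abs_of_nonneg (by linarith)]
    linarith
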